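/- The number of elements of the set P_k = {(a,b,c,d) ∈ ℕ⁴ : a + b + c + w_d = k}, where w_d = d - ⌊d/6⌋ + δ_{1, d mod 6}, is asymptotically k³/5; precisely, |P_k| = k³/5 + O(k²), i.e. there exists a constant C with ||P_k| - k³/5| ≤ C·k² for all k ≥ 1. -/

import Mathlib

/-- `w_d = d - ⌊d/6⌋ + δ_{1, d mod 6}` -/
def wd (d : ℕ) : ℕ := d - d / 6 + (if d % 6 = 1 then 1 else 0)

/-- The set `P_k` of quadruples `(a,b,c,d)` with `a + b + c + w_d = k`. -/
def Pk (k : ℕ) : Set (ℕ × ℕ × ℕ × ℕ) :=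
  {q | q.1 + q.2.1 + q.2.2.1 + wd q.2.2.2 = k}

open Finset

lemma wd_lb (d : ℕ) : 5 * d ≤ 6 * wd d := by unfold wd; split <;> omega
lemma wd_ub (d : ℕ) : 6 * wd d ≤ 5 * d + 11 := by unfold wd; split <;> omega

/-- triples with sum n -/
def Sfin (n : ℕ) : Finset (ℕ × ℕ × ℕ) :=
  (range (n+1)).biUnion (fun a => (Finset.HasAntidiagonal.antidiagonal (n - a)).image fun p => (a, p.1, p.2))

lemma mem_Sfin (n a b c : ℕ) : (a, b, c) ∈ Sfin n ↔ a + b + c = n := by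
  simp only [Sfin, mem_biUnion, mem_range, mem_image, Finset.HasAntidiagonal.mem_antidiagonal, Prod.mk.injEq,
    Prod.exists]
  constructor
  · rintro ⟨a', ha', b', c', hbc, rfl, rfl, rfl⟩; omega
  · intro h; exact ⟨a, by omega, b, c, by omega, rfl, rfl, rfl⟩

lemma Sfin_card (n : ℕ) : 2 * (Sfin n).card = (n + 1) * (n + 2) := by
  rw [Sfin, card_biUnion]
  · have : ∀ a ∈ range (n+1),
        ((Finset.HasAntidiagonal.antidiagonal (n - a)).image fun p : ℕ × ℕ => (a, p.1, p.2)).card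
          = n - a + 1 := by
      intro a _
      rw [Finset.card_image_of_injective _ (fun p q h => by
        simp only [Prod.mk.injEq] at h; exact Prod.ext h.2.1 h.2.2),
        Finset.Nat.card_antidiagonal]
    rw [Finset.sum_congr rfl this]
    have h2 : ∑ x ∈ range (n+1), (n - x + 1) = ∑ x ∈ range (n+1), (x + 1) := by
      rw [← Finset.sum_range_reflect (fun i => i + 1) (n+1)]
      refine Finset.sum_congr rfl fun i hi => ?_
      simp only [mem_range] at hi; omega
    have h3 : ∀ m : ℕ, 2 * ∑ x ∈ range m, (x + 1) = m * (m + 1) := by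
      intro m
      induction m with
      | zero => simp
      | succ m ih => rw [Finset.sum_range_succ, Nat.mul_add, ih]; ring
    rw [h2, h3]
  · intro a ha b hb hab
    simp only [Finset.disjoint_left, mem_image, Prod.exists]
    rintro x ⟨p, q, hp, rfl⟩ ⟨p', q', hq, h⟩
    simp only [Prod.mk.injEq] at h
    exact hab h.1.symm

def Uk (k : ℕ) : Finset (ℕ × ℕ × ℕ × ℕ) :=
  (range (6 * k / 5 + 1)).biUnion
    (fun d => (if wd d ≤ k then Sfin (k - wd d) else ∅).image fun t => (t.1, t.2.1, t.2.2, d))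

lemma Pk_eq (k : ℕ) : Pk k = ↑(Uk k) := by
  ext ⟨a, b, c, d⟩
  simp only [Pk, Set.mem_setOf_eq, Uk, Finset.coe_biUnion, Set.mem_iUnion, Finset.mem_coe,
    mem_range, mem_image, Prod.exists, Prod.mk.injEq]
  constructor
  · intro h
    have h1 := wd_lb d
    refine ⟨d, by omega, ?_⟩
    rw [if_pos (by omega)]
    exact ⟨a, b, c, (mem_Sfin _ _ _ _).2 (by omega), rfl, rfl, rfl, rfl⟩
  · rintro ⟨d', hd', ht⟩
    by_cases hw : wd d' ≤ k
    · rw [if_pos hw] at ht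
      obtain ⟨a', b', c', hm, rfl, rfl, rfl, rfl⟩ := ht
      rw [mem_Sfin] at hm; omega
    · rw [if_neg hw] at ht; simp at ht

lemma key (k : ℕ) : 2 * (Pk k).ncard
    = ∑ d ∈ range (6 * k / 5 + 1), (if wd d ≤ k then (k - wd d + 1) * (k - wd d + 2) else 0) := by
  rw [Pk_eq, Set.ncard_coe_finset, Uk, card_biUnion, Finset.mul_sum]
  · refine Finset.sum_congr rfl fun d _ => ?_
    split
    · rw [Finset.card_image_of_injective _ (fun p q h => by
        simp only [Prod.mk.injEq] at h; exact Prod.ext h.1 (Prod.ext h.2.1 h.2.2.1)),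
        Sfin_card]
    · simp
  · intro a ha b hb hab
    simp only [Finset.disjoint_left, mem_image, Prod.exists]
    rintro x ⟨p, q, r, hp, rfl⟩ ⟨p', q', r', hq, h⟩
    simp only [Prod.mk.injEq] at h
    exact hab h.2.2.2.symm

lemma sum_sq (A B : ℝ) (n : ℕ) :
    ∑ d ∈ range n, (A - B * d) ^ 2
      = n * A ^ 2 - A * B * (n * (n - 1)) + B ^ 2 * (n * (n - 1) * (2 * n - 1)) / 6 := by
  induction n with
  | zero => simp
  | succ n ih => rw [Finset.sum_range_succ, ih]; push_cast; ring

lemma upper (k : ℕ) :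
    (2 * (Pk k).ncard : ℝ) ≤ ∑ d ∈ range (6 * k / 5 + 1), ((k : ℝ) + 2 - 5 / 6 * d) ^ 2 := by
  have h : (2 * ((Pk k).ncard : ℝ))
      = ((∑ d ∈ range (6 * k / 5 + 1),
          (if wd d ≤ k then (k - wd d + 1) * (k - wd d + 2) else 0) : ℕ) : ℝ) := by
    exact_mod_cast key k
  push_cast at h
  rw [h]
  refine Finset.sum_le_sum fun d hd => ?_
  split_ifs with hw
  · have h1 := wd_lb d
    have h2 : ((k - wd d : ℕ) : ℝ) = (k : ℝ) - wd d := by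
      rw [Nat.cast_sub hw]
    have h3 : (5 * d : ℝ) ≤ 6 * wd d := by exact_mod_cast h1
    have h4 : (wd d : ℝ) ≤ k := by exact_mod_cast hw
    push_cast [h2]
    nlinarith [sq_nonneg ((k : ℝ) - wd d)]
  · positivity

lemma lower (k : ℕ) (hk : 2 ≤ k) :
    ∑ d ∈ range ((6 * k - 11) / 5 + 1), ((k : ℝ) - 5 / 6 - 5 / 6 * d) ^ 2
      ≤ (2 * (Pk k).ncard : ℝ) := by
  have hsub : (6 * k - 11) / 5 + 1 ≤ 6 * k / 5 + 1 := by omega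
  have hmono : ∑ d ∈ range ((6 * k - 11) / 5 + 1),
        (if wd d ≤ k then (k - wd d + 1) * (k - wd d + 2) else 0)
      ≤ ∑ d ∈ range (6 * k / 5 + 1),
        (if wd d ≤ k then (k - wd d + 1) * (k - wd d + 2) else 0) :=
    Finset.sum_le_sum_of_subset (Finset.range_subset_range.2 hsub)
  have hn : (∑ d ∈ range ((6 * k - 11) / 5 + 1),
        (if wd d ≤ k then (k - wd d + 1) * (k - wd d + 2) else 0))
      ≤ 2 * (Pk k).ncard := (key k) ▸ hmono
  have h : ((∑ d ∈ range ((6 * k - 11) / 5 + 1),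
        (if wd d ≤ k then (k - wd d + 1) * (k - wd d + 2) else 0) : ℕ) : ℝ)
      ≤ (2 * (Pk k).ncard : ℝ) := by exact_mod_cast hn
  refine le_trans ?_ h
  push_cast
  refine Finset.sum_le_sum fun d hd => ?_
  simp only [mem_range] at hd
  have hd5 : 5 * d ≤ 6 * k - 11 := by omega
  have hub := wd_ub d
  have hw : wd d ≤ k := by omega
  rw [if_pos hw]
  have h2 : ((k - wd d : ℕ) : ℝ) = (k : ℝ) - wd d := by rw [Nat.cast_sub hw]
  have h3 : (6 * wd d : ℝ) ≤ 5 * d + 11 := by exact_mod_cast hub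
  have h5 : (5 * d : ℝ) ≤ 6 * k - 11 := by
    have h6 : (11:ℕ) ≤ 6 * k := by omega
    have h7 : ((5 * d : ℕ) : ℝ) ≤ ((6 * k - 11 : ℕ) : ℝ) := Nat.cast_le.2 hd5
    rw [Nat.cast_sub h6] at h7
    push_cast at h7
    linarith
  push_cast [h2]
  nlinarith [sq_nonneg ((k:ℝ) - wd d)]

lemma upper2 (k : ℕ) (hk : 1 ≤ k) :
    (2 : ℝ) * (Pk k).ncard ≤ 2 * (k : ℝ) ^ 3 / 5 + 200 * (k : ℝ) ^ 2 := by
  refine (upper k).trans ?_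
  rw [sum_sq ((k : ℝ) + 2) (5 / 6) (6 * k / 5 + 1)]
  have h1 : 6 * k + 1 ≤ 5 * (6 * k / 5 + 1) := by omega
  have h2 : 5 * (6 * k / 5 + 1) ≤ 6 * k + 5 := by omega
  set M := 6 * k / 5 + 1 with hM
  have h1' : 6 * (k : ℝ) + 1 ≤ 5 * (M : ℝ) := by exact_mod_cast h1
  have h2' : 5 * (M : ℝ) ≤ 6 * (k : ℝ) + 5 := by exact_mod_cast h2
  have hk' : (1 : ℝ) ≤ (k : ℝ) := by exact_mod_cast hk
  nlinarith [mul_nonneg (mul_nonneg (by linarith : (0:ℝ) ≤ 5*(M:ℝ) - 6*k - 1)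
      (by linarith : (0:ℝ) ≤ 6*(k:ℝ) + 5 - 5*M)) (by positivity : (0:ℝ) ≤ (k:ℝ)),
    mul_nonneg (by linarith : (0:ℝ) ≤ 5*(M:ℝ) - 6*k - 1) (sq_nonneg (k:ℝ)),
    mul_nonneg (by linarith : (0:ℝ) ≤ 6*(k:ℝ) + 5 - 5*M) (sq_nonneg (k:ℝ)),
    mul_nonneg (by linarith : (0:ℝ) ≤ 5*(M:ℝ) - 6*k - 1) (sq_nonneg (M:ℝ)),
    mul_nonneg (by linarith : (0:ℝ) ≤ 6*(k:ℝ) + 5 - 5*M) (sq_nonneg (M:ℝ)),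
    sq_nonneg ((k:ℝ) - M), sq_nonneg ((M:ℝ)), hk', h1', h2']

lemma lower2 (k : ℕ) (hk : 2 ≤ k) :
    2 * (k : ℝ) ^ 3 / 5 - 200 * (k : ℝ) ^ 2 ≤ (2 : ℝ) * (Pk k).ncard := by
  refine le_trans ?_ (lower k hk)
  rw [sum_sq ((k : ℝ) - 5 / 6) (5 / 6) ((6 * k - 11) / 5 + 1)]
  have h1 : 6 * k - 10 ≤ 5 * ((6 * k - 11) / 5 + 1) := by omega
  have h2 : 5 * ((6 * k - 11) / 5 + 1) ≤ 6 * k - 6 := by omega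
  set m := (6 * k - 11) / 5 + 1 with hm
  have h1' : 6 * (k : ℝ) - 10 ≤ 5 * (m : ℝ) := by
    have h6 : (10:ℕ) ≤ 6 * k := by omega
    have := Nat.cast_le (α := ℝ).2 h1
    rw [Nat.cast_sub h6] at this; push_cast at this ⊢; linarith
  have h2' : 5 * (m : ℝ) ≤ 6 * (k : ℝ) - 6 := by
    have h6 : (6:ℕ) ≤ 6 * k := by omega
    have := Nat.cast_le (α := ℝ).2 h2
    rw [Nat.cast_sub h6] at this; push_cast at this ⊢; linarith
  have hk' : (2 : ℝ) ≤ (k : ℝ) := by exact_mod_cast hk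
  nlinarith [mul_nonneg (by linarith : (0:ℝ) ≤ 5*(m:ℝ) - 6*k + 10) (sq_nonneg (k:ℝ)),
    mul_nonneg (by linarith : (0:ℝ) ≤ 6*(k:ℝ) - 6 - 5*m) (sq_nonneg (k:ℝ)),
    mul_nonneg (by linarith : (0:ℝ) ≤ 5*(m:ℝ) - 6*k + 10) (sq_nonneg (m:ℝ)),
    mul_nonneg (by linarith : (0:ℝ) ≤ 6*(k:ℝ) - 6 - 5*m) (sq_nonneg (m:ℝ)),
    sq_nonneg ((k:ℝ) - m), hk', h1', h2']

/-- `|P_k| = k³/5 + O(k²)`: there is a constant `C` with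
`| |P_k| - k³/5 | ≤ C·k²` for all `k ≥ 1`. -/
theorem stmt5 : ∃ C : ℝ, ∀ k : ℕ, 1 ≤ k →
    |((Pk k).ncard : ℝ) - (k : ℝ) ^ 3 / 5| ≤ C * (k : ℝ) ^ 2 := by
  refine ⟨100, fun k hk => ?_⟩
  rcases eq_or_lt_of_le hk with h1 | h2
  · -- k = 1
    have hk1 : k = 1 := h1.symm
    subst hk1
    have h := key 1
    norm_num [Finset.sum_range_succ, wd] at h
    have : (Pk 1).ncard = 3 := by omega
    rw [this]
    rw [abs_le]
    norm_num
  · have hk2 : 2 ≤ k := h2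
    have hu := upper2 k hk
    have hl := lower2 k hk2
    rw [abs_le]
    constructor <;> nlinarith
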